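/- Let G be a finite simple graph. A subset S of V(G) is an equimatchable set in G if and only if for every second best matching M of G (i.e., every maximal matching of size ν(G) − 1), S contains at least one vertex exposed by M. -/

import Mathlib

/-!
If `M` and `N` are matchings with `|M| < |N|`, then `M ∪ N` contains a matching with one edge
more than `M` that still covers every vertex covered by `M`: this is augmentation along an
alternating path, carried out here one edge exchange at a time by induction on `|M \ N|`.
A matching covering all vertices of a maximal matching is itself maximal. So a maximal matching
covering `S` of size `k < ν(G)` can be grown, keeping `S` covered and maximality, to every size
between `k` and `ν(G)`; in particular to a second best matching and to a maximum one.
-/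

open SimpleGraph

variable {V : Type*}

/-- `M` is a matching in `G`: a set of pairwise vertex-disjoint edges of `G`. -/
def IsMatchingIn (G : SimpleGraph V) (M : Finset (Sym2 V)) : Prop :=
  (∀ e ∈ M, e ∈ G.edgeSet) ∧
    ∀ e ∈ M, ∀ f ∈ M, e ≠ f → ∀ v : V, v ∈ e → v ∉ f

/-- `M` is a maximal matching in `G`: a matching not properly contained in another matching. -/
def IsMaximalMatchingIn (G : SimpleGraph V) (M : Finset (Sym2 V)) : Prop :=
  IsMatchingIn G M ∧ ∀ M', IsMatchingIn G M' → M ⊆ M' → M' = M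

/-- `M` saturates (covers) the vertex `v`. -/
def Sat (M : Finset (Sym2 V)) (v : V) : Prop := ∃ e ∈ M, v ∈ e

/-- The matching number `ν(G)`. -/
noncomputable def nuNum (G : SimpleGraph V) : ℕ :=
  sSup {n | ∃ M, IsMatchingIn G M ∧ M.card = n}

/-- The minimum maximal matching number `β(G)`. -/
noncomputable def betaNum (G : SimpleGraph V) : ℕ :=
  sInf {n | ∃ M, IsMaximalMatchingIn G M ∧ M.card = n}

/-- The matching gap `μ(G) = ν(G) - β(G)`. -/
noncomputable def muGap (G : SimpleGraph V) : ℕ := nuNum G - betaNum G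

/-- `M` covers the vertex set `S`. -/
def CoversSet (M : Finset (Sym2 V)) (S : Set V) : Prop := ∀ v ∈ S, Sat M v

/-- `S` is an equimatchable set in `G`: all maximal matchings of `G` covering `S`
have the same size. -/
def EquiSet (G : SimpleGraph V) (S : Set V) : Prop :=
  ∀ M M' : Finset (Sym2 V), IsMaximalMatchingIn G M → IsMaximalMatchingIn G M' →
    CoversSet M S → CoversSet M' S → M.card = M'.card

/-- A second best matching: a maximal matching of size `ν(G) - 1`. -/
def IsSecondBest (G : SimpleGraph V) (M : Finset (Sym2 V)) : Prop :=
  IsMaximalMatchingIn G M ∧ M.card + 1 = nuNum G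

open Finset

variable {G : SimpleGraph V} {M N : Finset (Sym2 V)} {e f : Sym2 V} {u v w x : V}

theorem Sat.erase [DecidableEq V] (h : Sat M x) (hx : x ∉ e) : Sat (M.erase e) x := by
  obtain ⟨g, hg, hxg⟩ := h
  exact ⟨g, mem_erase.2 ⟨fun hge => hx (hge ▸ hxg), hg⟩, hxg⟩

theorem sat_insert [DecidableEq V] : Sat (insert f M) x ↔ x ∈ f ∨ Sat M x := by
  simp [Sat]

theorem notMem_of_not_sat (h : ¬ Sat M x) (hx : x ∈ e) : e ∉ M :=
  fun he => h ⟨e, he, hx⟩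

namespace IsMatchingIn

theorem eq_of_mem_of_mem (hM : IsMatchingIn G M) (he : e ∈ M) (hf : f ∈ M) (hxe : x ∈ e)
    (hxf : x ∈ f) : e = f := by
  by_contra hef
  exact hM.2 e he f hf hef x hxe hxf

theorem mono (hM : IsMatchingIn G M) (h : N ⊆ M) : IsMatchingIn G N :=
  ⟨fun e he => hM.1 e (h he), fun e he f hf => hM.2 e (h he) f (h hf)⟩

protected theorem insert [DecidableEq V] (hM : IsMatchingIn G M) (hf : f ∈ G.edgeSet)
    (hfM : ∀ x ∈ f, ¬ Sat M x) : IsMatchingIn G (insert f M) := by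
  refine ⟨forall_mem_insert _ _ _ |>.2 ⟨hf, hM.1⟩, ?_⟩
  intro a ha b hb hab x hxa hxb
  rcases mem_insert.1 ha with rfl | haM <;> rcases mem_insert.1 hb with rfl | hbM
  · exact hab rfl
  · exact hfM x hxa ⟨b, hbM, hxb⟩
  · exact hfM x hxb ⟨a, haM, hxa⟩
  · exact hM.2 a haM b hbM hab x hxa hxb

theorem card_biUnion_toFinset [DecidableEq V] (hM : IsMatchingIn G M) :
    #(M.biUnion Sym2.toFinset) = 2 * #M := by
  rw [card_biUnion, sum_congr rfl fun e he =>
    Sym2.card_toFinset_of_not_isDiag e (G.not_isDiag_of_mem_edgeSet (hM.1 e he)), sum_const,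
    smul_eq_mul, mul_comm]
  intro e he f hf hef
  exact disjoint_left.2 fun x hxe hxf =>
    hM.2 e he f hf hef x (Sym2.mem_toFinset.1 hxe) (Sym2.mem_toFinset.1 hxf)

theorem exists_sat_not_sat (hM : IsMatchingIn G M) (hN : IsMatchingIn G N) (h : #M < #N) :
    ∃ x, Sat N x ∧ ¬ Sat M x := by
  classical
  by_contra! hNM
  have hsub : N.biUnion Sym2.toFinset ⊆ M.biUnion Sym2.toFinset := by
    intro x hx
    obtain ⟨e, he, hxe⟩ := mem_biUnion.1 hx
    obtain ⟨g, hg, hxg⟩ := hNM x ⟨e, he, Sym2.mem_toFinset.1 hxe⟩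
    exact mem_biUnion.2 ⟨g, hg, Sym2.mem_toFinset.2 hxg⟩
  have hle := card_le_card hsub
  rw [hN.card_biUnion_toFinset, hM.card_biUnion_toFinset] at hle
  omega

theorem exchange [DecidableEq V] (hM : IsMatchingIn G M) (he : s(v, w) ∈ M) (hu : ¬ Sat M u)
    (huv : s(u, v) ∈ G.edgeSet) : IsMatchingIn G (insert s(u, v) (M.erase s(v, w))) := by
  refine (hM.mono (erase_subset _ _)).insert huv ?_
  rintro x hx ⟨g, hg, hxg⟩
  obtain ⟨hgvw, hgM⟩ := mem_erase.1 hg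
  rcases Sym2.mem_iff.1 hx with rfl | rfl
  · exact hu ⟨g, hgM, hxg⟩
  · exact hgvw (hM.eq_of_mem_of_mem hgM he hxg (Sym2.mem_mk_left _ _))

theorem card_exchange [DecidableEq V] (he : s(v, w) ∈ M) (hu : ¬ Sat M u) :
    #(insert s(u, v) (M.erase s(v, w))) = #M := by
  rw [card_insert_of_notMem fun h => notMem_of_not_sat hu (Sym2.mem_mk_left u v)
    (mem_of_mem_erase h), card_erase_add_one he]

end IsMatchingIn

theorem Sat.exchange [DecidableEq V] (h : Sat M x) (hxw : x ≠ w) :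
    Sat (insert s(u, v) (M.erase s(v, w))) x := by
  by_cases hx : x ∈ s(v, w)
  · rcases Sym2.mem_iff.1 hx with rfl | rfl
    · exact sat_insert.2 (Or.inl (Sym2.mem_mk_right _ _))
    · exact absurd rfl hxw
  · exact sat_insert.2 (Or.inr (h.erase hx))

theorem IsMatchingIn.exists_augment [DecidableEq V] {M N : Finset (Sym2 V)}
    (hM : IsMatchingIn G M) (hN : IsMatchingIn G N) (h : #M < #N) :
    ∃ M', IsMatchingIn G M' ∧ M' ⊆ M ∪ N ∧ #M' = #M + 1 ∧
      ∀ x, Sat M x → Sat M' x := by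
  obtain ⟨u, ⟨f, hfN, huf⟩, hu⟩ := hM.exists_sat_not_sat hN h
  obtain ⟨v, rfl⟩ := Sym2.mem_iff_exists.1 huf
  by_cases hv : Sat M v
  swap
  · refine ⟨insert s(u, v) M, hM.insert (hN.1 _ hfN) ?_,
      insert_subset (mem_union_right _ hfN) subset_union_left,
      card_insert_of_notMem (notMem_of_not_sat hu huf), fun x hx => sat_insert.2 (Or.inr hx)⟩
    intro x hx
    rcases Sym2.mem_iff.1 hx with rfl | rfl <;> assumption
  obtain ⟨e, he, hve⟩ := hv
  obtain ⟨w, rfl⟩ := Sym2.mem_iff_exists.1 hve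
  have heN : s(v, w) ∉ N := fun heN =>
    hu ⟨s(v, w), he, hN.eq_of_mem_of_mem hfN heN (Sym2.mem_mk_right u v) hve ▸ huf⟩
  -- trading `s(v, w)` for `s(u, v)` brings `M` closer to `N`; augment the result recursively
  set M₁ := insert s(u, v) (M.erase s(v, w))
  have hM₁ : IsMatchingIn G M₁ := hM.exchange he hu (hN.1 _ hfN)
  have hM₁card : #M₁ = #M := IsMatchingIn.card_exchange he hu
  have hM₁N : M₁ ⊆ M ∪ N :=
    insert_subset (mem_union_right _ hfN) ((erase_subset _ _).trans subset_union_left)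
  have hdecr : M₁ \ N ⊂ M \ N := by
    refine (?_ : M₁ \ N ⊆ (M \ N).erase s(v, w)).trans_ssubset
      (erase_ssubset (mem_sdiff.2 ⟨he, heN⟩))
    intro g hg
    obtain ⟨hgM₁, hgN⟩ := mem_sdiff.1 hg
    obtain ⟨hgvw, hgM⟩ :=
      mem_erase.1 ((mem_insert.1 hgM₁).resolve_left (ne_of_mem_of_not_mem hfN hgN).symm)
    exact mem_erase.2 ⟨hgvw, mem_sdiff.2 ⟨hgM, hgN⟩⟩
  obtain ⟨M₂, hM₂, hM₂N, hM₂card, hM₂sat⟩ := hM₁.exists_augment hN (hM₁card ▸ h)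
  have hM₂N' : M₂ ⊆ M ∪ N := hM₂N.trans (union_subset hM₁N subset_union_right)
  have hsat₁ : ∀ x, Sat M x → x ≠ w → Sat M₂ x := fun x hx hxw =>
    hM₂sat x (hx.exchange hxw)
  by_cases hw : Sat M₂ w
  · refine ⟨M₂, hM₂, hM₂N', by rw [hM₂card, hM₁card], fun x hx => ?_⟩
    rcases eq_or_ne x w with rfl | hxw
    · exact hw
    · exact hsat₁ x hx hxw
  -- `w` is exposed by `M₂`, whose edge at `v` must be `s(u, v)`: trade it back for `s(v, w)`
  have hvu : s(v, u) ∈ M₂ := by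
    obtain ⟨g, hg, hvg⟩ := hM₂sat v ⟨_, mem_insert_self _ _, Sym2.mem_mk_right u v⟩
    have hguv : g = s(u, v) := by
      rcases mem_union.1 (hM₂N hg) with hgM₁ | hgN
      · exact hM₁.eq_of_mem_of_mem hgM₁ (mem_insert_self _ _) hvg (Sym2.mem_mk_right u v)
      · exact hN.eq_of_mem_of_mem hgN hfN hvg (Sym2.mem_mk_right u v)
    rwa [Sym2.eq_swap, ← hguv]
  have hwv : s(w, v) ∈ M := Sym2.eq_swap ▸ he
  refine ⟨insert s(w, v) (M₂.erase s(v, u)), hM₂.exchange hvu hw (hM.1 _ hwv),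
    insert_subset (mem_union_left _ hwv) ((erase_subset _ _).trans hM₂N'),
    by rw [IsMatchingIn.card_exchange hvu hw, hM₂card, hM₁card], fun x hx => ?_⟩
  rcases eq_or_ne x w with rfl | hxw
  · exact sat_insert.2 (Or.inl (Sym2.mem_mk_left _ _))
  · exact (hsat₁ x hx hxw).exchange fun hxu => hu (hxu ▸ hx)
termination_by #(M \ N)
decreasing_by exact card_lt_card hdecr

namespace IsMaximalMatchingIn

theorem exists_sat_of_mem_edgeSet (hM : IsMaximalMatchingIn G M) (he : e ∈ G.edgeSet) :
    ∃ x ∈ e, Sat M x := by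
  classical
  by_contra! hfree
  have heM : insert e M = M := hM.2 _ (hM.1.insert he hfree) (subset_insert _ _)
  exact hfree _ e.out_fst_mem ⟨e, heM ▸ mem_insert_self e M, e.out_fst_mem⟩

theorem of_sat (hM : IsMaximalMatchingIn G M) (hN : IsMatchingIn G N)
    (hsat : ∀ x, Sat M x → Sat N x) : IsMaximalMatchingIn G N := by
  refine ⟨hN, fun N' hN' hNN' => Subset.antisymm (fun g hg => ?_) hNN'⟩
  obtain ⟨x, hxg, hx⟩ := hM.exists_sat_of_mem_edgeSet (hN'.1 g hg)
  obtain ⟨g', hg', hxg'⟩ := hsat x hx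
  exact hN'.eq_of_mem_of_mem hg (hNN' hg') hxg hxg' ▸ hg'

end IsMaximalMatchingIn

section MatchingNumber

variable [Finite V]

theorem bddAbove_matching_cards (G : SimpleGraph V) :
    BddAbove {n | ∃ M, IsMatchingIn G M ∧ #M = n} := by
  cases nonempty_fintype V
  classical
  exact ⟨Fintype.card (Sym2 V), by rintro n ⟨M, -, rfl⟩; exact card_le_univ M⟩

theorem IsMatchingIn.card_le_nuNum (hM : IsMatchingIn G M) : #M ≤ nuNum G :=
  le_csSup (bddAbove_matching_cards G) ⟨M, hM, rfl⟩

theorem exists_isMatchingIn_card_eq_nuNum (G : SimpleGraph V) :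
    ∃ M, IsMatchingIn G M ∧ #M = nuNum G :=
  Nat.sSup_mem (s := {n | ∃ M, IsMatchingIn G M ∧ #M = n})
    ⟨0, ∅, ⟨by simp, by simp⟩, rfl⟩ (bddAbove_matching_cards G)

theorem IsMaximalMatchingIn.exists_card_eq (hM : IsMaximalMatchingIn G M) {k : ℕ}
    (hMk : #M ≤ k) (hk : k ≤ nuNum G) :
    ∃ M', IsMaximalMatchingIn G M' ∧ #M' = k ∧ ∀ x, Sat M x → Sat M' x := by
  classical
  induction k, hMk using Nat.le_induction with
  | base => exact ⟨M, hM, rfl, fun _ => id⟩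
  | succ k _ ih =>
    obtain ⟨M₁, hM₁, hM₁card, hsat₁⟩ := ih (by omega)
    obtain ⟨N, hN, hNcard⟩ := exists_isMatchingIn_card_eq_nuNum G
    obtain ⟨M₂, hM₂, -, hM₂card, hsat₂⟩ := hM₁.1.exists_augment hN (by omega)
    exact ⟨M₂, hM₁.of_sat hM₂ hsat₂, by omega, fun x hx => hsat₂ x (hsat₁ x hx)⟩

end MatchingNumber

theorem stmt_12 {V : Type*} [Fintype V] (G : SimpleGraph V) (S : Set V) :
    EquiSet G S ↔ ∀ M : Finset (Sym2 V), IsSecondBest G M → ∃ v ∈ S, ¬ Sat M v := by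
  constructor
  · rintro hS M ⟨hM, hcard⟩
    by_contra! hcov
    obtain ⟨M', hM', hM'card, hsat⟩ := hM.exists_card_eq (k := nuNum G) (by omega) le_rfl
    have := hS M M' hM hM' hcov fun v hv => hsat v (hcov v hv)
    omega
  · intro hS
    have hcard : ∀ M, IsMaximalMatchingIn G M → CoversSet M S → #M = nuNum G := by
      intro M hM hcov
      by_contra hne
      have hlt : #M < nuNum G := lt_of_le_of_ne hM.1.card_le_nuNum hne
      obtain ⟨M₁, hM₁, hM₁card, hsat⟩ :=
        hM.exists_card_eq (k := nuNum G - 1) (by omega) (by omega)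
      obtain ⟨v, hvS, hv⟩ := hS M₁ ⟨hM₁, by omega⟩
      exact hv (hsat v (hcov v hvS))
    intro M M' hM hM' hcov hcov'
    rw [hcard M hM hcov, hcard M' hM' hcov']
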